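/- arXiv:1302.1686 — 4 statements merged into one kernel-verified Lean document; each statement's English description precedes it below -/
import Mathlib

section
/- Let w be a nonzero vector in ℝ⁴. Then there is no linear map G : ℝ⁴ → ℝ⁴ such that for every unit timelike vector ξ one has G ξ = η(ξ, w) • ξ − w. (This is the pointwise content of Proposition 2: at any point p where the gradient of the conformal factor Ω is nonvanishing, no rank-2 tensor field G_ab can satisfy the trade-off equation relating ∇-geodesics to their acceleration Ω⁻³(ξᵃ ξⁿ∇ₙΩ − gᵃʳ∇ᵣΩ) relative to the Levi-Civita derivative operator of the conformally rescaled metric, for all unit timelike tangent vectors ξ at p.) -/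
/-- The Minkowski bilinear form on ℝ⁴. -/
def eta (u v : Fin 4 → ℝ) : ℝ :=
  u 0 * v 0 - u 1 * v 1 - u 2 * v 2 - u 3 * v 3

/-!
A linear map is odd, whereas `ξ ↦ η(ξ,w) • ξ - w` is even and the unit hyperboloid is symmetric
under `ξ ↦ -ξ`. So a linear `G` agreeing with it there forces `η(ξ,w) • ξ = w` for every unit
timelike `ξ`: `w` would be parallel to two linearly independent unit timelike vectors, hence zero.
-/

theorem LinearMap.eq_zero_of_eq_even_on_symmetric {R M N : Type*} [DivisionRing R] [CharZero R]
    [AddCommGroup M] [Module R M] [AddCommGroup N] [Module R N] (G : M →ₗ[R] N)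
    {P : M → Prop} (hP : ∀ x, P x → P (-x)) {F : M → N} (hF : ∀ x, F (-x) = F x)
    (hG : ∀ x, P x → G x = F x) {x : M} (hx : P x) : F x = 0 := by
  have h : F x + F x = 0 := by
    nth_rewrite 1 [← hF x]
    rw [← hG x hx, ← hG (-x) (hP x hx), map_neg, neg_add_cancel]
  rw [← two_smul R] at h
  exact (smul_eq_zero.mp h).resolve_left two_ne_zero

theorem eta_neg_left (u v : Fin 4 → ℝ) : eta (-u) v = -eta u v := by
  simp only [eta, Pi.neg_apply]
  ring

theorem eta_neg_right (u v : Fin 4 → ℝ) : eta u (-v) = -eta u v := by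
  simp only [eta, Pi.neg_apply]
  ring

theorem eq_zero_of_forall_unit_timelike_eta_smul_eq (w : Fin 4 → ℝ)
    (h : ∀ ξ : Fin 4 → ℝ, eta ξ ξ = 1 → eta ξ w • ξ = w) : w = 0 := by
  have he : eta ![1, 0, 0, 0] ![1, 0, 0, 0] = 1 := by simp [eta]
  have hξ : eta ![5 / 4, 3 / 4, 0, 0] ![5 / 4, 3 / 4, 0, 0] = 1 := by simp [eta]; norm_num
  have hpar := congrFun ((h _ he).trans (h _ hξ).symm) 1
  have hc : eta ![5 / 4, 3 / 4, 0, 0] w = 0 := by simpa using hpar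
  rw [← h _ hξ, hc, zero_smul]

/-- Pointwise content of Proposition 2: for nonzero `w`, there is no linear map
`G : ℝ⁴ → ℝ⁴` with `G ξ = η(ξ,w) • ξ - w` for every unit timelike `ξ`. -/
theorem no_rank2_universal_force (w : Fin 4 → ℝ) (hw : w ≠ 0) :
    ¬ ∃ G : (Fin 4 → ℝ) →ₗ[ℝ] (Fin 4 → ℝ),
      ∀ ξ : Fin 4 → ℝ, eta ξ ξ = 1 → G ξ = eta ξ w • ξ - w := by
  rintro ⟨G, hG⟩
  refine hw (eq_zero_of_forall_unit_timelike_eta_smul_eq w fun ξ hξ => sub_eq_zero.mp ?_)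
  refine G.eq_zero_of_eq_even_on_symmetric (P := fun ξ => eta ξ ξ = 1) (fun ξ h => ?_)
    (fun ξ => ?_) hG hξ
  · rwa [eta_neg_left, eta_neg_right, neg_neg]
  · rw [eta_neg_left, neg_smul_neg]
end

section
/- Let B : V → V → ℝ be a symmetric bilinear form on a real vector space V, suppose there exist two linearly independent vectors u₁, u₂ with B(u₁,u₁) = 1 and B(u₂,u₂) = 1, and let w ∈ V be nonzero. Then there is no linear map G : V → V such that G ξ = B(ξ, w) • ξ − w for every vector ξ with B(ξ,ξ) = 1. (This is the pointwise content of the paper's remark that Proposition 2 generalizes immediately to semi-Riemannian metrics of any signature: the relationship between the derivative operators of two conformally equivalent non-degenerate metrics can never be captured by a rank-2 tensor.) -/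
/-!
`G` is odd, while `ξ ↦ B(ξ, w) • ξ - w` is even, and the `B`-unit vectors are
symmetric under `ξ ↦ -ξ`. Hence both sides vanish at every unit vector, i.e. `w` is a multiple
of every `B`-unit vector; two linearly independent ones then force `w = 0`.
-/

lemma eq_smul_of_map_eq_smul_sub_of_map_neg {R M : Type*} [Ring R] [AddCommGroup M]
    [Module R M] [IsAddTorsionFree M] (G : M →ₗ[R] M) (f : M →ₗ[R] R) {w ξ : M}
    (hξ : G ξ = f ξ • ξ - w) (hnegξ : G (-ξ) = f (-ξ) • -ξ - w) : w = f ξ • ξ := by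
  have hodd : -G ξ = G ξ := by rw [← map_neg, hnegξ, hξ, map_neg, neg_smul_neg]
  rw [← sub_eq_zero, ← neg_sub, ← hξ, neg_eq_self.mp hodd, neg_zero]

theorem no_rank2_universal_force_semiRiemannian_general
    {V : Type*} [AddCommGroup V] [Module ℝ V]
    (B : V →ₗ[ℝ] V →ₗ[ℝ] ℝ)
    (u₁ u₂ : V) (hind : LinearIndependent ℝ ![u₁, u₂])
    (hu₁ : B u₁ u₁ = 1) (hu₂ : B u₂ u₂ = 1)
    (w : V) (hw : w ≠ 0) :
    ¬ ∃ G : V →ₗ[ℝ] V, ∀ ξ : V, B ξ ξ = 1 → G ξ = B ξ w • ξ - w := by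
  rintro ⟨G, hG⟩
  have := IsAddTorsionFree.of_isTorsionFree ℝ V
  have along_unit : ∀ ξ, B ξ ξ = 1 → w = B ξ w • ξ := fun ξ hξ =>
    eq_smul_of_map_eq_smul_sub_of_map_neg G (B.flip w) (hG ξ hξ) (hG (-ξ) (by simpa using hξ))
  have hcoeff := hind.eq_zero_of_pair' ((along_unit u₁ hu₁).symm.trans (along_unit u₂ hu₂))
  exact hw (by rw [along_unit u₁ hu₁, hcoeff.1, zero_smul])

/-- Semi-Riemannian generalization of the pointwise content of Proposition 2:
for a symmetric bilinear form `B` admitting two linearly independent `B`-unit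
vectors, and nonzero `w`, there is no linear map `G : V → V` with
`G ξ = B(ξ,w) • ξ - w` for every `B`-unit vector `ξ`. -/
theorem no_rank2_universal_force_semiRiemannian
    {V : Type*} [AddCommGroup V] [Module ℝ V]
    (B : V →ₗ[ℝ] V →ₗ[ℝ] ℝ) (hBsymm : ∀ u v : V, B u v = B v u)
    (u₁ u₂ : V) (hind : LinearIndependent ℝ ![u₁, u₂])
    (hu₁ : B u₁ u₁ = 1) (hu₂ : B u₂ u₂ = 1)
    (w : V) (hw : w ≠ 0) :
    ¬ ∃ G : V →ₗ[ℝ] V, ∀ ξ : V, B ξ ξ = 1 → G ξ = B ξ w • ξ - w :=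
  no_rank2_universal_force_semiRiemannian_general B u₁ u₂ hind hu₁ hu₂ w hw
end

section
/- Let G : ℝ⁴ → ℝ⁴ → ℝ be a symmetric bilinear form such that G(ξ,ξ) = 0 for every timelike vector ξ. Then G = 0, i.e., G(u,v) = 0 for all u, v ∈ ℝ⁴. (This is the paper's claim that since Reichenbach's universal force field G_ab must be symmetric, the vector Gᵃ_b ξᵇ can be orthogonal to ξᵃ for all timelike vectors ξ at a point only if G_ab vanishes at that point; equivalently, a symmetric rank-2 field cannot produce forces orthogonal to every possible worldline unless it is zero.) -/
/-!
The quadratic form `ξ ↦ G ξ ξ` vanishes on the timelike vectors, a nonempty open set. On the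
line through a timelike `x` in any direction `v`, `G (x + t v) (x + t v)` is a quadratic in `t`
whose `t²`-coefficient is `G v v`; it vanishes for all small `t`, so `G v v = 0`. A symmetric form
with vanishing quadratic form is zero by polarization.
-/

open Filter Topology

namespace LinearMap

theorem IsAlt.eq_zero_of_symm {R M : Type*} [CommRing R] [NoZeroDivisors R] [CharZero R]
    [AddCommGroup M] [Module R M] {B : M →ₗ[R] M →ₗ[R] R} (hB : B.IsAlt)
    (hsymm : ∀ x y, B x y = B y x) (x y : M) : B x y = 0 := by
  have h := hB.neg x y
  rw [← hsymm x y, neg_eq_iff_add_eq_zero] at h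
  exact add_self_eq_zero.mp h

theorem apply_self_eq_zero_of_apply_add_smul_self {R M : Type*} [Field R] [CharZero R]
    [AddCommGroup M] [Module R M] (B : M →ₗ[R] M →ₗ[R] R) {x v : M} {t : R} (ht : t ≠ 0)
    (hx : B x x = 0) (hplus : B (x + t • v) (x + t • v) = 0)
    (hminus : B (x - t • v) (x - t • v) = 0) : B v v = 0 := by
  have key : B (x + t • v) (x + t • v) + B (x - t • v) (x - t • v)
      = 2 * B x x + 2 * t ^ 2 * B v v := by
    simp only [map_add, map_sub, map_smul, LinearMap.add_apply, LinearMap.sub_apply,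
      LinearMap.smul_apply, smul_eq_mul]
    ring
  rw [hplus, hminus, hx] at key
  have : (2 * t ^ 2) * B v v = 0 := by linear_combination -key
  exact (mul_eq_zero.mp this).resolve_left (mul_ne_zero two_ne_zero (pow_ne_zero 2 ht))

theorem isAlt_of_apply_self_eq_zero_on_open {M : Type*} [AddCommGroup M] [Module ℝ M]
    [TopologicalSpace M] [IsTopologicalAddGroup M] [ContinuousSMul ℝ M] (B : M →ₗ[ℝ] M →ₗ[ℝ] ℝ)
    {U : Set M} (hU : IsOpen U) {x : M} (hxU : x ∈ U) (hB : ∀ y ∈ U, B y y = 0) :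
    B.IsAlt := by
  intro v
  have hline : ∀ᶠ t : ℝ in 𝓝 0, x + t • v ∈ U ∧ x - t • v ∈ U := by
    have hplus : Tendsto (fun t : ℝ => x + t • v) (𝓝 0) (𝓝 x) :=
      (by fun_prop : Continuous fun t : ℝ => x + t • v).tendsto' 0 x (by simp)
    have hminus : Tendsto (fun t : ℝ => x - t • v) (𝓝 0) (𝓝 x) :=
      (by fun_prop : Continuous fun t : ℝ => x - t • v).tendsto' 0 x (by simp)
    exact (hplus.eventually_mem (hU.mem_nhds hxU)).and (hminus.eventually_mem (hU.mem_nhds hxU))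
  obtain ⟨t, ⟨hplus, hminus⟩, ht⟩ :=
    ((hline.filter_mono nhdsWithin_le_nhds).and self_mem_nhdsWithin).exists (f := 𝓝[>] (0 : ℝ))
  exact apply_self_eq_zero_of_apply_add_smul_self B ht.ne' (hB x hxU) (hB _ hplus) (hB _ hminus)

end LinearMap

theorem isOpen_setOf_timelike : IsOpen {ξ : Fin 4 → ℝ | 0 < eta ξ ξ} :=
  isOpen_lt continuous_const (by unfold eta; fun_prop)

/-- A symmetric bilinear form on ℝ⁴ that vanishes on every timelike vector
(equivalently: whose associated force is η-orthogonal to every timelike vector)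
must vanish identically. -/
theorem symm_bilinear_vanishing_on_timelike_is_zero
    (G : (Fin 4 → ℝ) →ₗ[ℝ] (Fin 4 → ℝ) →ₗ[ℝ] ℝ)
    (hGsymm : ∀ u v : Fin 4 → ℝ, G u v = G v u)
    (h : ∀ ξ : Fin 4 → ℝ, eta ξ ξ > 0 → G ξ ξ = 0) :
    ∀ u v : Fin 4 → ℝ, G u v = 0 := by
  have hunit : eta (Pi.single 0 1) (Pi.single 0 1) = 1 := by simp [eta]
  have hG : G.IsAlt :=
    G.isAlt_of_apply_self_eq_zero_on_open isOpen_setOf_timelike (x := Pi.single 0 1)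
      (by simp [hunit]) h
  exact hG.eq_zero_of_symm hGsymm
end

section
/- Pointwise form of Proposition 1. Let V be a 4-dimensional real vector space, let t : V → ℝ be a nonzero linear functional, and let h : V* → V be a linear map from the dual space to V that is symmetric (ω(h σ) = σ(h ω) for all covectors ω, σ) and whose kernel is exactly the span of t. Let κ : V → V → ℝ be an alternating bilinear form and define C : V → V → V by C(u,v) = (t u) • h(κ(v,·)) + (t v) • h(κ(u,·)), where κ(v,·) denotes the covector u ↦ κ(v,u). Then there exists a unique alternating bilinear form G : V → V → ℝ such that for every ξ ∈ V with t ξ = 1, h applied to the covector u ↦ G(u,ξ) equals −C(ξ,ξ); indeed G = 2κ works. (In the paper: given a classical spacetime (M, t_a, h^{ab}, ∇) and any other torsion-free derivative operator ∇̃ compatible with t_a and h^{ab}, whose difference tensor is necessarily C^a_{bc} = 2h^{an}t_{(b}κ_{c)n} for antisymmetric κ_{ab}, there is a unique antisymmetric field G_{ab} such that a timelike curve with unit tangent ξᵃ is a ∇-geodesic iff ξⁿ∇̃ₙξᵃ = h^{am}G_{mn}ξⁿ; here −C(ξ,ξ) is the ∇̃-acceleration of a ∇-geodesic with unit tangent ξ.)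 -/
/-!
Two alternating forms `G`, `G'` solving the force equation differ by an alternating `D` with
`h (D(·, ξ)) = 0` for every unit timelike `ξ`, so `D(·, ξ) = c • t` since `ker h = span {t}`.
Evaluating at `ξ` gives `c = D(ξ, ξ) = 0`. Hence `D(·, ξ)` vanishes on the affine hyperplane
`t = 1`, which spans `V`, and `D = 0`. Existence is the computation `2κ(·, ξ) = -2κ(ξ, ·)`.
-/

namespace LinearMap

variable {K V W : Type*} [Field K] [AddCommGroup V] [Module K V] [AddCommGroup W] [Module K W]

theorem eq_zero_of_forall_dual_eq_one {t : Module.Dual K V} (ht : t ≠ 0) {f : V →ₗ[K] W}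
    (hf : ∀ ξ, t ξ = 1 → f ξ = 0) : f = 0 := by
  obtain ⟨ξ₀, hξ₀⟩ := LinearMap.surjective ht 1
  ext v
  have hshift : t (v - t v • ξ₀ + ξ₀) = 1 := by simp [hξ₀]
  have := hf _ hshift
  rw [map_add, map_sub, map_smul, hf ξ₀ hξ₀, smul_zero, sub_zero, add_zero] at this
  simpa using this

theorem IsAlt.flip_eq_zero_of_mem_span {B : V →ₗ[K] V →ₗ[K] K} (hB : B.IsAlt)
    {t : Module.Dual K V} {ξ : V} (hξ : t ξ = 1) (hmem : B.flip ξ ∈ K ∙ t) : B.flip ξ = 0 := by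
  obtain ⟨c, hc⟩ := Submodule.mem_span_singleton.mp hmem
  have hc0 : c = 0 := by
    simpa [hξ, hB.self_eq_zero ξ] using LinearMap.congr_fun hc ξ
  rw [← hc, hc0, zero_smul]

theorem IsAlt.eq_zero_of_flip_mem_span {B : V →ₗ[K] V →ₗ[K] K} (hB : B.IsAlt)
    {t : Module.Dual K V} (ht : t ≠ 0) (hspan : ∀ ξ, t ξ = 1 → B.flip ξ ∈ K ∙ t) : B = 0 :=
  flip_inj <| eq_zero_of_forall_dual_eq_one ht fun ξ hξ ↦
    hB.flip_eq_zero_of_mem_span hξ (hspan ξ hξ)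

theorem IsAlt.flip_eq_neg {B : V →ₗ[K] V →ₗ[K] K} (hB : B.IsAlt) : B.flip = -B := by
  ext x y
  exact (hB.neg x y).symm

end LinearMap

theorem classical_universal_force_exists_unique_general
    {V : Type*} [AddCommGroup V] [Module ℝ V]
    (t : Module.Dual ℝ V) (ht : t ≠ 0)
    (h : Module.Dual ℝ V →ₗ[ℝ] V)
    (hker : LinearMap.ker h = Submodule.span ℝ {t})
    (κ : V →ₗ[ℝ] V →ₗ[ℝ] ℝ) (hκ : ∀ v : V, κ v v = 0)
    (C : V → V → V)
    (hC : ∀ u v : V, C u v = t u • h (κ v) + t v • h (κ u)) :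
    ((∀ v : V, (2 • κ) v v = 0) ∧
      (∀ ξ : V, t ξ = 1 → h ((2 • κ).flip ξ) = -C ξ ξ)) ∧
    (∃! G : V →ₗ[ℝ] V →ₗ[ℝ] ℝ,
      (∀ v : V, G v v = 0) ∧ (∀ ξ : V, t ξ = 1 → h (G.flip ξ) = -C ξ ξ)) := by
  have halt : (2 • κ).IsAlt := fun v ↦ by simp [hκ]
  have hforce (ξ : V) (hξ : t ξ = 1) : h ((2 • κ).flip ξ) = -C ξ ξ := by
    rw [halt.flip_eq_neg, hC, hξ, one_smul]
    simp only [LinearMap.neg_apply, LinearMap.smul_apply, map_neg, map_nsmul]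
    module
  refine ⟨⟨halt, hforce⟩, 2 • κ, ⟨halt, hforce⟩, ?_⟩
  rintro G ⟨hGalt, hGforce⟩
  have hDalt : (G - 2 • κ).IsAlt := fun v ↦ by simp [hGalt v, hκ v]
  refine sub_eq_zero.mp (hDalt.eq_zero_of_flip_mem_span ht fun ξ hξ ↦ ?_)
  rw [← hker, LinearMap.mem_ker]
  change h (G.flip ξ - (2 • κ).flip ξ) = 0
  rw [map_sub, hGforce ξ hξ, hforce ξ hξ, sub_self]

/-- Pointwise form of Proposition 1: given the classical-metric data `t` (temporal
metric, a nonzero covector) and `h` (spatial metric, a symmetric map from covectors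
to vectors with kernel exactly the span of `t`) on a 4-dimensional vector space,
and an antisymmetric `κ` determining the difference tensor
`C(u,v) = (t u) • h(κ(v,·)) + (t v) • h(κ(u,·))`, there is a unique antisymmetric
bilinear form `G` such that for every unit timelike vector `ξ` (i.e. `t ξ = 1`),
`h` applied to the covector `u ↦ G(u,ξ)` equals `-C(ξ,ξ)`; indeed `G = 2κ` works. -/
theorem classical_universal_force_exists_unique
    {V : Type*} [AddCommGroup V] [Module ℝ V] [FiniteDimensional ℝ V]
    (hdim : Module.finrank ℝ V = 4)
    (t : Module.Dual ℝ V) (ht : t ≠ 0)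
    (h : Module.Dual ℝ V →ₗ[ℝ] V)
    (hsymm : ∀ ω σ : Module.Dual ℝ V, ω (h σ) = σ (h ω))
    (hker : LinearMap.ker h = Submodule.span ℝ {t})
    (κ : V →ₗ[ℝ] V →ₗ[ℝ] ℝ) (hκ : ∀ v : V, κ v v = 0)
    (C : V → V → V)
    (hC : ∀ u v : V, C u v = t u • h (κ v) + t v • h (κ u)) :
    ((∀ v : V, (2 • κ) v v = 0) ∧
      (∀ ξ : V, t ξ = 1 → h ((2 • κ).flip ξ) = -C ξ ξ)) ∧
    (∃! G : V →ₗ[ℝ] V →ₗ[ℝ] ℝ,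
      (∀ v : V, G v v = 0) ∧ (∀ ξ : V, t ξ = 1 → h (G.flip ξ) = -C ξ ξ)) :=
  classical_universal_force_exists_unique_general t ht h hker κ hκ C hC
end
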